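/- arXiv:1603.01676 — 2 statements merged into one kernel-verified Lean document; each statement's English description precedes it below -/
import Mathlib

section
/- For every ε > 0, the second derivative k''_ε of k_ε satisfies k''_ε(r) ≥ 0 for every r ∈ ℝ. -/
/-- The C²-regularization `k_ε` of the squared negative part. -/
noncomputable def kEps (ε : ℝ) : ℝ → ℝ := fun r =>
  if r < -ε then r ^ 2 - ε ^ 2 / 6
  else if r < 0 then -(r ^ 3 / ε) * (r / (2 * ε) + 4 / 3)
  else 0

/-!
On `(-∞, -ε)`, `[-ε, 0)` and `[0, ∞)` the function `k_ε` is a polynomial, and the pieces agree to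
second order at the break points, so `k''_ε` is the piecewise second derivative:
`2`, then `-(2r/ε²)(3r + 4ε)`, then `0`, all nonnegative.
-/

open Set

theorem hasDerivAt_ite_lt {E : Type*} [NormedAddCommGroup E] [NormedSpace ℝ E]
    {f g f' g' : ℝ → E} {a : ℝ}
    (hf : ∀ x ≤ a, HasDerivAt f (f' x) x) (hg : ∀ x, a ≤ x → HasDerivAt g (g' x) x)
    (hfg : f a = g a) (hfg' : f' a = g' a) (x : ℝ) :
    HasDerivAt (fun y => if y < a then f y else g y) (if x < a then f' x else g' x) x := by
  rcases lt_trichotomy x a with hx | rfl | hx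
  · have hloc : (fun y => if y < a then f y else g y) =ᶠ[nhds x] f := by
      filter_upwards [Iio_mem_nhds hx] with y hy
      simp [mem_Iio.mp hy]
    simpa [hx] using (hf x hx.le).congr_of_eventuallyEq hloc
  · rw [if_neg (lt_irrefl x)]
    have hleft : HasDerivWithinAt (fun y => if y < x then f y else g y) (g' x) (Iic x) x :=
      hfg' ▸ (hf x le_rfl).hasDerivWithinAt.congr
        (fun y hy => by rcases (mem_Iic.mp hy).lt_or_eq with hy | rfl <;> simp [*]) (by simp [hfg])
    have hright : HasDerivWithinAt (fun y => if y < x then f y else g y) (g' x) (Ici x) x :=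
      (hg x le_rfl).hasDerivWithinAt.congr (fun y hy => by simp [not_lt.mpr (mem_Ici.mp hy)])
        (by simp)
    have hboth := hleft.union hright
    rwa [Iic_union_Ici, hasDerivWithinAt_univ] at hboth
  · have hloc : (fun y => if y < a then f y else g y) =ᶠ[nhds x] g := by
      filter_upwards [Ioi_mem_nhds hx] with y hy
      simp [not_lt.mpr (mem_Ioi.mp hy).le]
    simpa [not_lt.mpr hx.le] using (hg x hx.le).congr_of_eventuallyEq hloc

noncomputable def negPiecewise (ε : ℝ) (p q : ℝ → ℝ) : ℝ → ℝ := fun r =>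
  if r < -ε then p r else if r < 0 then q r else 0

theorem hasDerivAt_negPiecewise {ε : ℝ} (hε : 0 < ε) {p q p' q' : ℝ → ℝ}
    (hp : ∀ x, HasDerivAt p (p' x) x) (hq : ∀ x, HasDerivAt q (q' x) x)
    (hpq : p (-ε) = q (-ε)) (hpq' : p' (-ε) = q' (-ε)) (hq₀ : q 0 = 0) (hq₀' : q' 0 = 0)
    (x : ℝ) : HasDerivAt (negPiecewise ε p q) (negPiecewise ε p' q' x) x :=
  have hε' : -ε < 0 := neg_neg_iff_pos.mpr hε
  hasDerivAt_ite_lt (fun y _ => hp y)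
    (fun y _ => hasDerivAt_ite_lt (fun z _ => hq z) (fun z _ => hasDerivAt_const z 0) hq₀ hq₀' y)
    (by simp [hε', hpq]) (by simp [hε', hpq']) x

theorem hasDerivAt_kEps {ε : ℝ} (hε : 0 < ε) (x : ℝ) :
    HasDerivAt (kEps ε)
      (negPiecewise ε (fun r => 2 * r) (fun r => -(2 * r ^ 2 / ε ^ 2) * (r + 2 * ε)) x) x := by
  refine hasDerivAt_negPiecewise hε (fun y => ?_) (fun y => ?_) ?_ ?_ (by simp) (by simp) x
  · simpa using (hasDerivAt_pow 2 y).sub_const (ε ^ 2 / 6)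
  · refine (((hasDerivAt_pow 3 y).div_const ε).neg.mul
      (((hasDerivAt_id' y).div_const (2 * ε)).add_const (4 / 3))).congr_deriv ?_
    simp only [Pi.neg_apply]
    field_simp
    ring
  · field_simp
    ring
  · field_simp
    ring

theorem hasDerivAt_deriv_kEps {ε : ℝ} (hε : 0 < ε) (x : ℝ) :
    HasDerivAt (deriv (kEps ε))
      (negPiecewise ε (fun _ => 2) (fun r => -(2 * r / ε ^ 2) * (3 * r + 4 * ε)) x) x := by
  rw [funext fun y => (hasDerivAt_kEps hε y).deriv]
  refine hasDerivAt_negPiecewise hε (fun y => ?_) (fun y => ?_) ?_ ?_ (by simp) (by simp) x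
  · simpa using (hasDerivAt_id y).const_mul 2
  · refine ((((hasDerivAt_pow 2 y).const_mul 2).div_const (ε ^ 2)).neg.mul
      ((hasDerivAt_id' y).add_const (2 * ε))).congr_deriv ?_
    simp only [Pi.neg_apply]
    field_simp
    ring
  · field_simp
    ring
  · field_simp
    ring

theorem kEps_second_deriv_nonneg (ε : ℝ) (hε : 0 < ε) :
    ∀ r : ℝ, 0 ≤ deriv (deriv (kEps ε)) r := by
  intro r
  rw [(hasDerivAt_deriv_kEps hε r).deriv, negPiecewise]
  split_ifs with h₁ h₂
  · exact zero_le_two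
  · have hr : 0 ≤ -(2 * r / ε ^ 2) := by
      rw [neg_nonneg]
      exact div_nonpos_of_nonpos_of_nonneg (by linarith) (by positivity)
    exact mul_nonneg hr (by linarith)
  · exact le_rfl
end

section
/- For every ε > 0 and every r ∈ ℝ, |k'_ε(r) − (−2η(r))| ≤ ε; in particular k'_ε converges to −2η uniformly on ℝ as ε → 0. -/
/-- `η(r) = r⁻`, the negative part of `r`. -/
noncomputable def etaFun : ℝ → ℝ := fun r => max (-r) 0

open Filter Set Topology

theorem HasDerivAt.ite_lt {f g : ℝ → ℝ} {f' g' a x : ℝ} (hf : HasDerivAt f f' x)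
    (hg : HasDerivAt g g' x) (hfg : f a = g a) (hfg' : x = a → f' = g') :
    HasDerivAt (fun y => if y < a then f y else g y) (if x < a then f' else g') x := by
  rcases lt_trichotomy x a with hxa | rfl | hax
  · rw [if_pos hxa]
    refine hf.congr_of_eventuallyEq ?_
    filter_upwards [Iio_mem_nhds hxa] with y hy
    exact if_pos hy
  · rw [if_neg (lt_irrefl x), ← hasDerivWithinAt_univ, ← Iic_union_Ici]
    refine HasDerivWithinAt.union ?_ ?_
    · refine (hfg' rfl ▸ hf).hasDerivWithinAt.congr (fun y hy => ?_) (by simp [hfg])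
      rcases (mem_Iic.1 hy).lt_or_eq with hy | hy
      · rw [if_pos hy]
      · rw [hy, if_neg (lt_irrefl x), hfg]
    · exact hg.hasDerivWithinAt.congr (fun y hy => if_neg (not_lt.2 hy)) (if_neg (lt_irrefl x))
  · rw [if_neg hax.not_gt]
    refine hg.congr_of_eventuallyEq ?_
    filter_upwards [Ioi_mem_nhds hax] with y hy
    exact if_neg (not_lt.2 hy.le)

theorem tendstoUniformly_nhdsGT_zero_of_dist_le {β α : Type*} [PseudoMetricSpace α]
    {F : ℝ → β → α} {f : β → α} (hF : ∀ ε > 0, ∀ x, dist (F ε x) (f x) ≤ ε) :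
    TendstoUniformly F f (𝓝[>] 0) := by
  refine Metric.tendstoUniformly_iff.2 fun δ hδ => ?_
  filter_upwards [Ioo_mem_nhdsGT hδ] with ε hε x
  rw [dist_comm]
  exact (hF ε hε.1 x).trans_lt hε.2

noncomputable def kEpsDeriv (ε r : ℝ) : ℝ :=
  if r < -ε then 2 * r else if r < 0 then -2 * r ^ 3 / ε ^ 2 - 4 * r ^ 2 / ε else 0

theorem hasDerivAt_kEps_s4 {ε : ℝ} (hε : 0 < ε) (r : ℝ) :
    HasDerivAt (kEps ε) (kEpsDeriv ε r) r := by
  have hquad : HasDerivAt (fun x : ℝ => x ^ 2 - ε ^ 2 / 6) (2 * r) r := by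
    simpa using (hasDerivAt_pow 2 r).sub_const (ε ^ 2 / 6)
  have hquart : HasDerivAt (fun x : ℝ => -(x ^ 3 / ε) * (x / (2 * ε) + 4 / 3))
      (-2 * r ^ 3 / ε ^ 2 - 4 * r ^ 2 / ε) r := by
    have := (((hasDerivAt_pow 3 r).div_const ε).fun_neg).fun_mul
      (((hasDerivAt_id' r).div_const (2 * ε)).add_const (4 / 3 : ℝ))
    refine this.congr_deriv ?_
    field_simp
    ring
  have hinner := hquart.ite_lt (hasDerivAt_const r (0 : ℝ)) (a := 0) (by simp)
    (by rintro rfl; simp)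
  refine hquad.ite_lt hinner ?_ ?_
  · rw [if_pos (neg_lt_zero.2 hε)]
    field_simp
    ring
  · rintro rfl
    rw [if_pos (neg_lt_zero.2 hε)]
    field_simp
    ring

theorem kEpsDeriv_sub_eq_of_mem_Ico {ε r : ℝ} (hε : 0 < ε) (hr : r ∈ Ico (-ε) 0) :
    kEpsDeriv ε r - (-2 * etaFun r) = -2 * r * (ε + r) ^ 2 / ε ^ 2 := by
  rw [kEpsDeriv, if_neg (not_lt.2 hr.1), if_pos hr.2, etaFun, max_eq_left (by linarith [hr.2])]
  field_simp
  ring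

theorem abs_kEpsDeriv_sub_le {ε : ℝ} (hε : 0 < ε) (r : ℝ) :
    |kEpsDeriv ε r - (-2 * etaFun r)| ≤ ε := by
  rcases lt_or_ge r (-ε) with hr | hr
  · rw [kEpsDeriv, if_pos hr, etaFun, max_eq_left (by linarith)]
    simpa using hε.le
  rcases lt_or_ge r 0 with hr0 | hr0
  · have hr' : 0 ≤ -2 * r := by linarith
    rw [kEpsDeriv_sub_eq_of_mem_Ico hε ⟨hr, hr0⟩, abs_of_nonneg (by positivity),
      div_le_iff₀ (by positivity)]
    nlinarith [mul_le_mul_of_nonneg_right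
      (show -r * (ε + r) ≤ ε ^ 2 / 4 by nlinarith [sq_nonneg (ε + 2 * r)])
      (show 0 ≤ ε + r by linarith)]
  · rw [kEpsDeriv, if_neg (by linarith), if_neg (not_lt.2 hr0), etaFun, max_eq_right (by linarith)]
    simpa using hε.le

theorem kEps_deriv_tendstoUniformly :
    (∀ ε : ℝ, 0 < ε → ∀ r : ℝ, |deriv (kEps ε) r - (-2 * etaFun r)| ≤ ε) ∧
    TendstoUniformly (fun ε : ℝ => deriv (kEps ε)) (fun r => -2 * etaFun r)
      (nhdsWithin 0 (Set.Ioi 0)) := by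
  have hbound : ∀ ε : ℝ, 0 < ε → ∀ r : ℝ, |deriv (kEps ε) r - (-2 * etaFun r)| ≤ ε :=
    fun ε hε r => (hasDerivAt_kEps_s4 hε r).deriv ▸ abs_kEpsDeriv_sub_le hε r
  exact ⟨hbound, tendstoUniformly_nhdsGT_zero_of_dist_le hbound⟩
end
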